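/- Let σ_r, σ_p, c₁, c₂, c₃, c₀, λ₁, λ₂, δΘ ≥ 0 with λ₁, λ₂ > 0, N_r, N_p > 0, and q > 0. If (σ_r c₂)/(√N_r · λ₁) > (σ_p c₃)/(√N_p · λ₂) + (δΘ c₁)/(λ₂ c₀) and c₀ > 0, then c₀(√N_r σ_r c₂ + q √N_p σ_p c₃)/(N_r λ₁ + q N_p λ₂) + q δΘ N_p c₁/(N_r λ₁ + q N_p λ₂) < c₀ √N_r σ_r c₂/(N_r λ₁). -/

import Mathlib

/-! The bound with auxiliary data is the mediant of the bound without it, `x / y`, and a term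
`q x' / (q y')` coming from the auxiliary data. A mediant lies strictly below `x / y` exactly when
`x' / y'` does, and after multiplying by `c₀` this is the hypothesis. -/

theorem add_div_add_lt_div_of_div_lt {α : Type*} [Field α] [LinearOrder α] [IsStrictOrderedRing α]
    {a b c d : α} (hb : 0 < b) (hd : 0 < d) (h : c / d < a / b) :
    (a + c) / (b + d) < a / b := by
  rw [div_lt_div_iff₀ hd hb] at h
  rw [div_lt_div_iff₀ (add_pos hb hd) hb]
  linarith

theorem Real.mul_sqrt_mul_div_mul (c N x l : ℝ) :
    c * √N * x / (N * l) = c * (x / (√N * l)) := by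
  calc c * √N * x / (N * l) = c * x * (√N / N) / l := by ring
    _ = c * (x / (√N * l)) := by rw [Real.sqrt_div_self]; ring

theorem aux_data_strictly_improves_bound_general
    (σr σp c₁ c₂ c₃ c₀ δΘ : ℝ) (lam₁ lam₂ Nr Np q : ℝ)
    (hlam₁ : 0 < lam₁) (hlam₂ : 0 < lam₂)
    (hNr : 0 < Nr) (hNp : 0 < Np) (hq : 0 < q) (hc₀ : 0 < c₀)
    (hcond : σr * c₂ / (Real.sqrt Nr * lam₁) >
      σp * c₃ / (Real.sqrt Np * lam₂) + δΘ * c₁ / (lam₂ * c₀)) :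
    c₀ * (Real.sqrt Nr * σr * c₂ + q * Real.sqrt Np * σp * c₃) /
        (Nr * lam₁ + q * Np * lam₂) +
      q * δΘ * Np * c₁ / (Nr * lam₁ + q * Np * lam₂) <
    c₀ * Real.sqrt Nr * σr * c₂ / (Nr * lam₁) := by
  have haux : c₀ * √Np * (σp * c₃) / (Np * lam₂) + δΘ * Np * c₁ / (Np * lam₂) =
      c₀ * (σp * c₃ / (√Np * lam₂) + δΘ * c₁ / (lam₂ * c₀)) := by
    rw [Real.mul_sqrt_mul_div_mul]
    field_simp
  have hreal : c₀ * √Nr * (σr * c₂) / (Nr * lam₁) = c₀ * (σr * c₂ / (√Nr * lam₁)) :=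
    Real.mul_sqrt_mul_div_mul _ _ _ _
  calc _ = (c₀ * √Nr * (σr * c₂) + q * (c₀ * √Np * (σp * c₃) + δΘ * Np * c₁)) /
        (Nr * lam₁ + q * (Np * lam₂)) := by ring
    _ < c₀ * √Nr * (σr * c₂) / (Nr * lam₁) := by
      refine add_div_add_lt_div_of_div_lt (by positivity) (by positivity) ?_
      rw [mul_div_mul_left _ _ hq.ne', add_div, haux, hreal]
      exact mul_lt_mul_of_pos_left hcond hc₀
    _ = _ := by ring

theorem aux_data_strictly_improves_bound
    (σr σp c₁ c₂ c₃ c₀ δΘ : ℝ) (lam₁ lam₂ Nr Np q : ℝ)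
    (hσr : 0 ≤ σr) (hσp : 0 ≤ σp) (hc₁ : 0 ≤ c₁) (hc₂ : 0 ≤ c₂) (hc₃ : 0 ≤ c₃)
    (hδΘ : 0 ≤ δΘ) (hlam₁ : 0 < lam₁) (hlam₂ : 0 < lam₂)
    (hNr : 0 < Nr) (hNp : 0 < Np) (hq : 0 < q) (hc₀ : 0 < c₀)
    (hcond : σr * c₂ / (Real.sqrt Nr * lam₁) >
      σp * c₃ / (Real.sqrt Np * lam₂) + δΘ * c₁ / (lam₂ * c₀)) :
    c₀ * (Real.sqrt Nr * σr * c₂ + q * Real.sqrt Np * σp * c₃) /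
        (Nr * lam₁ + q * Np * lam₂) +
      q * δΘ * Np * c₁ / (Nr * lam₁ + q * Np * lam₂) <
    c₀ * Real.sqrt Nr * σr * c₂ / (Nr * lam₁) :=
  aux_data_strictly_improves_bound_general σr σp c₁ c₂ c₃ c₀ δΘ lam₁ lam₂ Nr Np q hlam₁ hlam₂ hNr
    hNp hq hc₀ hcond
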